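/- Let $X \sim \mathcal{N}(\eta_1, \sigma^2 I_d)$ and $Y \sim \mathcal{N}(\eta_2, \sigma^2 I_d)$ be Gaussian distributions on $\mathbb{R}^d$ with $\|\eta_1 - \eta_2\| \le \Delta$ and $\sigma = \Delta/\mu$. Then for every measurable set $A \subseteq \mathbb{R}^d$ and every $\epsilon \ge 0$, $\mathbb{P}(X \in A) \le e^\epsilon \mathbb{P}(Y \in A) + \delta_\mu(\epsilon)$, where $\delta_\mu(\epsilon) = \Phi(-\epsilon/\mu + \mu/2) - e^{\epsilon}\Phi(-\epsilon/\mu - \mu/2)$. -/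

import Mathlib

open ProbabilityTheory MeasureTheory

/-- Standard normal cumulative distribution function. -/
noncomputable def Phi (t : ℝ) : ℝ := (gaussianReal 0 1 (Set.Iic t)).toReal

/-- The `(ε, δ)`-DP curve of `μ`-Gaussian Differential Privacy. -/
noncomputable def deltaMu (μ ε : ℝ) : ℝ :=
  Phi (-ε / μ + μ / 2) - Real.exp ε * Phi (-ε / μ - μ / 2)

/-- The isotropic Gaussian measure `N(η, σ² I_d)` on `ℝ^d`, given by its density. -/
noncomputable def gaussMeasurePi (d : ℕ) (η : Fin d → ℝ) (σ : ℝ) :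
    Measure (Fin d → ℝ) :=
  volume.withDensity fun x =>
    ENNReal.ofReal ((2 * Real.pi * σ ^ 2) ^ (-(d : ℝ) / 2) *
      Real.exp (-(∑ i, (x i - η i) ^ 2) / (2 * σ ^ 2)))

section Aux

open Real Set
open scoped ENNReal NNReal

lemma lintegral_pi_prod' {n : ℕ} (μ : Fin n → Measure ℝ) [∀ i, SigmaFinite (μ i)]
    (f : Fin n → ℝ → ℝ≥0∞) (hf : ∀ i, Measurable (f i)) :
    ∫⁻ x : Fin n → ℝ, ∏ i, f i (x i) ∂(Measure.pi μ) = ∏ i, ∫⁻ y, f i y ∂(μ i) := by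
  induction n with
  | zero =>
    rw [Measure.pi_of_empty]
    simp
  | succ n ih =>
    have h := (measurePreserving_piFinSuccAbove μ 0).symm
    rw [← h.lintegral_comp_emb (MeasurableEquiv.measurableEmbedding _)]
    simp_rw [MeasurableEquiv.piFinSuccAbove_symm_apply, Fin.insertNthEquiv,
      Fin.prod_univ_succ, Fin.insertNth_zero]
    simp only [Fin.zero_succAbove, Function.comp_def, Fin.cons_zero, Fin.cons_succ,
      Equiv.coe_fn_mk, cast_eq]
    rw [lintegral_prod_mul (f := f 0) (g := fun y : Fin n → ℝ => ∏ j, f j.succ (y j))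
      (hf 0).aemeasurable
      (Finset.measurable_prod _ fun j _ => (hf j.succ).comp (measurable_pi_apply j)).aemeasurable]
    rw [ih (fun j => μ j.succ) (fun j => f j.succ) (fun j => hf j.succ)]

instance instGaussianRealSubtype (v : {r : ℝ // 0 ≤ r}) :
    IsProbabilityMeasure (gaussianReal 0 v) :=
  instIsProbabilityMeasureGaussianReal 0 v

lemma gaussMeasurePi_zero_eq_pi {d : ℕ} {σ : ℝ} (hσ : 0 < σ) :
    gaussMeasurePi d 0 σ
      = Measure.pi (fun _ : Fin d => gaussianReal 0 ⟨σ ^ 2, sq_nonneg σ⟩) := by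
  set V : ℝ≥0 := ⟨σ ^ 2, sq_nonneg σ⟩ with hV
  have hVne : V ≠ 0 := by
    rw [← NNReal.coe_ne_zero]
    have : (V:ℝ) = σ ^ 2 := rfl
    rw [this]; positivity
  have h2πσ : (0:ℝ) < 2 * Real.pi * σ ^ 2 := by positivity
  refine (Measure.pi_eq fun s hs => ?_).symm
  have hdens : ∀ x : Fin d → ℝ,
      Set.indicator (Set.pi Set.univ s)
        (fun x => ENNReal.ofReal ((2 * Real.pi * σ ^ 2) ^ (-(d : ℝ) / 2) *
          Real.exp (-(∑ i, (x i - (0 : Fin d → ℝ) i) ^ 2) / (2 * σ ^ 2)))) x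
      = ∏ i, ((s i).indicator (gaussianPDF 0 V)) (x i) := by
    intro x
    by_cases hx : x ∈ Set.pi Set.univ s
    · rw [Set.indicator_of_mem hx]
      have hx' : ∀ i, x i ∈ s i := fun i => hx i (Set.mem_univ i)
      have : ∀ i, ((s i).indicator (gaussianPDF 0 V)) (x i) = gaussianPDF 0 V (x i) :=
        fun i => Set.indicator_of_mem (hx' i) _
      simp_rw [this, gaussianPDF, ← ENNReal.ofReal_prod_of_nonneg
        (fun i _ => gaussianPDFReal_nonneg 0 V (x i))]
      congr 1
      unfold gaussianPDFReal
      rw [Finset.prod_mul_distrib, Finset.prod_const, Finset.card_univ, Fintype.card_fin,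
        ← Real.exp_sum]
      have hc : (2 * Real.pi * σ ^ 2) ^ (-(d : ℝ) / 2) = (√(2 * Real.pi * ↑V))⁻¹ ^ d := by
        have hVc : (V : ℝ) = σ ^ 2 := rfl
        rw [hVc, Real.sqrt_eq_rpow, ← Real.rpow_neg_one, ← Real.rpow_mul h2πσ.le,
          ← Real.rpow_natCast ((2 * Real.pi * σ ^ 2) ^ ((1/2 * -1 : ℝ))) d,
          ← Real.rpow_mul h2πσ.le]
        congr 1
        push_cast
        ring
      rw [hc]
      congr 1
      have hVc : (V : ℝ) = σ ^ 2 := rfl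
      rw [hVc]
      simp only [Pi.zero_apply]
      rw [← Finset.sum_neg_distrib, Finset.sum_div]
    · rw [Set.indicator_of_notMem hx]
      rw [Set.mem_univ_pi] at hx
      push_neg at hx
      obtain ⟨i, hi⟩ := hx
      exact (Finset.prod_eq_zero (Finset.mem_univ i)
        (by rw [Set.indicator_of_notMem hi])).symm
  rw [gaussMeasurePi, withDensity_apply _ (MeasurableSet.univ_pi hs),
    ← lintegral_indicator (MeasurableSet.univ_pi hs)]
  simp_rw [hdens]
  rw [show (volume : Measure (Fin d → ℝ)) = Measure.pi (fun _ => volume) from volume_pi,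
    lintegral_pi_prod' _ _ (fun i => (measurable_gaussianPDF 0 V).indicator (hs i))]
  refine Finset.prod_congr rfl fun i _ => ?_
  rw [lintegral_indicator (hs i), gaussianReal_apply 0 hVne]

lemma gaussMeasurePi_translate {d : ℕ} (η : Fin d → ℝ) (σ : ℝ) {B : Set (Fin d → ℝ)}
    (hB : MeasurableSet B) :
    gaussMeasurePi d η σ B = gaussMeasurePi d 0 σ ((fun z => z + η) ⁻¹' B) := by
  have hemb : MeasurableEmbedding (fun z : Fin d → ℝ => z + η) :=
    (MeasurableEquiv.addRight η).measurableEmbedding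
  have hmp : MeasurePreserving (fun z : Fin d → ℝ => z + η) volume volume :=
    measurePreserving_add_right volume η
  rw [gaussMeasurePi, gaussMeasurePi, withDensity_apply _ hB,
    withDensity_apply _ (hB.preimage hemb.measurable),
    ← hmp.setLIntegral_comp_preimage_emb hemb _ B]
  refine setLIntegral_congr_fun (hB.preimage hemb.measurable) ?_
  intro z _
  simp only [Pi.add_apply, Pi.zero_apply, add_sub_cancel_right, sub_zero]

lemma gaussMeasurePi_halfspace {d : ℕ} {σ : ℝ} (hσ : 0 < σ) {c : Fin d → ℝ}
    (hc : ∑ i, c i ^ 2 = 1) (t : ℝ) :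
    gaussMeasurePi d 0 σ {x | t < ∑ i, c i * x i}
      = gaussianReal 0 1 (Set.Ioi (t / σ)) := by
  have hd : 0 < d := by
    rcases Nat.eq_zero_or_pos d with h | h
    · subst h; simp at hc
    · exact h
  set i₀ : Fin d := ⟨0, hd⟩
  set u : EuclideanSpace ℝ (Fin d) := (WithLp.equiv 2 (Fin d → ℝ)).symm c with hu_def
  have hui : ∀ i, u i = c i := fun i => rfl
  have hnorm : ‖u‖ = 1 := by
    rw [EuclideanSpace.norm_eq]
    simp_rw [Real.norm_eq_abs, sq_abs, hui, hc, Real.sqrt_one]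
  have hON : Orthonormal ℝ (({i₀} : Set (Fin d)).restrict (fun _ : Fin d => u)) := by
    constructor
    · intro _; exact hnorm
    · intro i j hij
      exact absurd (Subtype.ext (by
        rw [Set.eq_of_mem_singleton i.2, Set.eq_of_mem_singleton j.2])) hij
  obtain ⟨b, hb⟩ := hON.exists_orthonormalBasis_extension_of_card_eq
    (finrank_euclideanSpace (𝕜 := ℝ) (ι := Fin d))
  have hbu : b i₀ = u := hb i₀ rfl
  set e₁ := (MeasurableEquiv.toLp 2 (Fin d → ℝ)).symm
  set He : (Fin d → ℝ) ≃ᵐ (Fin d → ℝ) :=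
    (e₁.symm.trans b.measurableEquiv.symm).trans e₁ with hHe_def
  have hHp : MeasurePreserving He volume volume :=
    (EuclideanSpace.volume_preserving_symm_measurableEquiv_toLp (Fin d)).comp
      ((b.measurePreserving_measurableEquiv.symm).comp
        (EuclideanSpace.volume_preserving_symm_measurableEquiv_toLp (Fin d)).symm)
  have hHy : ∀ y : Fin d → ℝ, ∀ i, He y i =
      (b.repr.symm ((WithLp.equiv 2 (Fin d → ℝ)).symm y)) i := fun y i => rfl
  have k1 : ∀ y : Fin d → ℝ, ∑ i, c i * He y i = y i₀ := by
    intro y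
    set z : EuclideanSpace ℝ (Fin d) := b.repr.symm ((WithLp.equiv 2 (Fin d → ℝ)).symm y)
    have : ∑ i, c i * He y i = (inner ℝ u z : ℝ) := by
      rw [PiLp.inner_apply]
      exact Finset.sum_congr rfl fun i _ => by rw [hHy, hui]; simp [z, mul_comm]
    rw [this, ← hbu, ← LinearIsometryEquiv.inner_map_map b.repr,
      b.repr.apply_symm_apply, OrthonormalBasis.repr_self,
      EuclideanSpace.inner_single_left]
    simp
  have k2 : ∀ y : Fin d → ℝ, ∑ i, (He y i) ^ 2 = ∑ i, (y i) ^ 2 := by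
    intro y
    set z : EuclideanSpace ℝ (Fin d) := b.repr.symm ((WithLp.equiv 2 (Fin d → ℝ)).symm y)
    have h1 : ∑ i, (He y i) ^ 2 = (inner ℝ z z : ℝ) := by
      rw [PiLp.inner_apply]
      refine Finset.sum_congr rfl fun i _ => ?_
      rw [hHy]; simp [sq]; rfl
    have h2 : (inner ℝ z z : ℝ) = ∑ i, (y i) ^ 2 := by
      rw [← b.repr.inner_map_map z z, b.repr.apply_symm_apply, PiLp.inner_apply]
      refine Finset.sum_congr rfl fun i _ => by simp [sq]
    rw [h1, h2]
  have hSm : MeasurableSet {x : Fin d → ℝ | t < ∑ i, c i * x i} := by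
    have : Measurable fun x : Fin d → ℝ => ∑ i, c i * x i :=
      Finset.measurable_sum _ fun i _ => (measurable_pi_apply i).const_mul _
    exact measurableSet_lt measurable_const this
  have hpre : He ⁻¹' {x | t < ∑ i, c i * x i} = {y | t < y i₀} := by
    ext y
    simp only [Set.mem_preimage, Set.mem_setOf_eq, k1]
  have hSm2 : MeasurableSet {y : Fin d → ℝ | t < y i₀} :=
    measurableSet_lt measurable_const (measurable_pi_apply i₀)
  have hrot : gaussMeasurePi d 0 σ {x | t < ∑ i, c i * x i}
      = gaussMeasurePi d 0 σ {y | t < y i₀} := by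
    rw [gaussMeasurePi, withDensity_apply _ hSm, withDensity_apply _ hSm2,
      ← hHp.setLIntegral_comp_preimage_emb He.measurableEmbedding _ _, hpre]
    refine setLIntegral_congr_fun hSm2 (fun y _ => ?_)
    simp only [Pi.zero_apply, sub_zero, k2]
  rw [hrot, gaussMeasurePi_zero_eq_pi hσ]
  have hbox : {y : Fin d → ℝ | t < y i₀}
      = Set.pi Set.univ (fun j => if j = i₀ then Set.Ioi t else Set.univ) := by
    ext y
    simp only [Set.mem_setOf_eq, Set.mem_univ_pi]
    constructor
    · intro h j
      by_cases hj : j = i₀ <;> simp [hj, h]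
    · intro h
      have := h i₀
      simpa using this
  rw [hbox, Measure.pi_pi]
  have hprod : ∏ j, gaussianReal 0 ⟨σ ^ 2, sq_nonneg σ⟩ (if j = i₀ then Set.Ioi t else Set.univ)
      = gaussianReal 0 ⟨σ ^ 2, sq_nonneg σ⟩ (Set.Ioi t) := by
    rw [Finset.prod_eq_single i₀]
    · rw [if_pos rfl]
    · intro j _ hj; rw [if_neg hj, measure_univ]
    · intro h; exact absurd (Finset.mem_univ i₀) h
  rw [hprod]
  have hmap : (gaussianReal 0 1).map (σ * ·) = gaussianReal 0 ⟨σ ^ 2, sq_nonneg σ⟩ := by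
    rw [gaussianReal_map_const_mul σ]
    congr 1
    · ring
    · ext : 1; simp; rfl
  rw [← hmap, Measure.map_apply (measurable_const_mul σ) measurableSet_Ioi]
  congr 1
  ext z
  simp only [Set.mem_preimage, Set.mem_Ioi]
  rw [div_lt_iff₀' hσ]

lemma gaussianReal_Ioi_toReal (t : ℝ) :
    (gaussianReal 0 1 (Set.Ioi t)).toReal = Phi (-t) := by
  have hneg : (gaussianReal 0 1).map ((-1 : ℝ) * ·) = gaussianReal 0 1 := by
    rw [gaussianReal_map_const_mul (-1 : ℝ)]
    congr 1
    · ring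
    · ext : 1; simp
  have h1 : gaussianReal 0 1 (Set.Ioi t) = gaussianReal 0 1 (Set.Iio (-t)) := by
    conv_lhs => rw [← hneg]
    rw [Measure.map_apply (measurable_const_mul _) measurableSet_Ioi]
    congr 1
    ext z
    simp only [Set.mem_preimage, Set.mem_Ioi, Set.mem_Iio]
    constructor <;> intro h <;> nlinarith
  have h2 : gaussianReal 0 1 (Set.Iio (-t)) = gaussianReal 0 1 (Set.Iic (-t)) := by
    have hsing : gaussianReal 0 1 {(-t : ℝ)} = 0 :=
      gaussianReal_absolutelyContinuous 0 one_ne_zero (measure_singleton _)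
    rw [show Set.Iio (-t) = Set.Iic (-t) \ {(-t : ℝ)} by simp, measure_diff_null hsing]
  rw [h1, h2, Phi]

lemma exp_mul_Phi_le {μ ε : ℝ} (hμ : 0 < μ) :
    Real.exp ε * Phi (-ε / μ - μ / 2) ≤ Phi (-ε / μ + μ / 2) := by
  obtain ⟨b, hb⟩ : ∃ b : ℝ, b = -ε / μ - μ / 2 := ⟨_, rfl⟩
  rw [← hb]
  have key : (ENNReal.ofReal (Real.exp ε)) * gaussianReal 0 1 (Set.Iic b)
      ≤ gaussianReal (-μ) 1 (Set.Iic b) := by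
    rw [gaussianReal_apply 0 one_ne_zero, gaussianReal_apply (-μ) one_ne_zero,
      ← lintegral_const_mul _ (measurable_gaussianPDF 0 1)]
    refine setLIntegral_mono (measurable_gaussianPDF (-μ) 1) fun x hx => ?_
    rw [gaussianPDF, gaussianPDF, ← ENNReal.ofReal_mul (Real.exp_nonneg ε)]
    refine ENNReal.ofReal_le_ofReal ?_
    rw [gaussianPDFReal, gaussianPDFReal]
    rw [show Real.exp ε * ((√(2 * Real.pi * (1:ℝ≥0)))⁻¹ * Real.exp (-(x - 0) ^ 2 / (2 * (1:ℝ≥0))))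
        = (√(2 * Real.pi * (1:ℝ≥0)))⁻¹ * (Real.exp ε * Real.exp (-(x - 0) ^ 2 / (2 * (1:ℝ≥0)))) by
      ring]
    refine mul_le_mul_of_nonneg_left ?_ (by positivity)
    rw [← Real.exp_add, Real.exp_le_exp]
    have hx' : x ≤ b := hx
    have hxb : μ * x ≤ μ * b := by nlinarith
    have hbv : μ * b = -ε - μ ^ 2 / 2 := by
      rw [hb]; field_simp
    simp only [NNReal.coe_one, mul_one, sub_zero, sub_neg_eq_add]
    have hexp : -(x + μ) ^ 2 / 2 = -x ^ 2 / 2 - μ * x - μ ^ 2 / 2 := by ring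
    linarith
  have hmap : gaussianReal (-μ) 1 (Set.Iic b) = gaussianReal 0 1 (Set.Iic (b + μ)) := by
    have : (gaussianReal 0 1).map (· + (-μ)) = gaussianReal (-μ) 1 := by
      rw [gaussianReal_map_add_const (-μ)]; congr 1; ring
    rw [← this, Measure.map_apply (measurable_add_const _) measurableSet_Iic]
    congr 1
    ext z
    simp only [Set.mem_preimage, Set.mem_Iic]
    constructor <;> intro h <;> linarith
  rw [hmap] at key
  have := ENNReal.toReal_mono (measure_ne_top _ _) key
  rw [ENNReal.toReal_mul, ENNReal.toReal_ofReal (Real.exp_nonneg ε)] at this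
  have harg : b + μ = -ε / μ + μ / 2 := by rw [hb]; ring
  rw [harg] at this
  exact this

lemma deltaMu_nonneg {μ ε : ℝ} (hμ : 0 < μ) : 0 ≤ deltaMu μ ε := by
  rw [deltaMu]
  exact sub_nonneg.mpr (exp_mul_Phi_le hμ)

end Aux

theorem stmt6 (d : ℕ) (η₁ η₂ : Fin d → ℝ) (Δ μ σ : ℝ)
    (hμ : 0 < μ) (hΔ : 0 < Δ)
    (hdist : Real.sqrt (∑ i, (η₁ i - η₂ i) ^ 2) ≤ Δ)
    (hσ : σ = Δ / μ)
    (A : Set (Fin d → ℝ)) (hA : MeasurableSet A) (ε : ℝ) (hε : 0 ≤ ε) :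
    (gaussMeasurePi d η₁ σ A).toReal ≤
      Real.exp ε * (gaussMeasurePi d η₂ σ A).toReal + deltaMu μ ε := by
  have hσpos : 0 < σ := by rw [hσ]; positivity
  have hΔσμ : Δ = σ * μ := by rw [hσ]; field_simp
  have hle_one : ∀ (η : Fin d → ℝ) (B : Set (Fin d → ℝ)), MeasurableSet B →
      gaussMeasurePi d η σ B ≤ 1 := by
    intro η B hB
    have hprob : IsProbabilityMeasure (gaussMeasurePi d 0 σ) := by
      rw [gaussMeasurePi_zero_eq_pi hσpos]; infer_instance
    rw [gaussMeasurePi_translate η σ hB]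
    calc gaussMeasurePi d 0 σ _ ≤ gaussMeasurePi d 0 σ Set.univ :=
          measure_mono (Set.subset_univ _)
    _ = 1 := measure_univ
  have hne_top : ∀ (η : Fin d → ℝ) (B : Set (Fin d → ℝ)), MeasurableSet B →
      gaussMeasurePi d η σ B ≠ ⊤ :=
    fun η B hB => ((hle_one η B hB).trans_lt ENNReal.one_lt_top).ne
  by_cases hQ : ∑ i, (η₁ i - η₂ i) ^ 2 = 0
  · have hη : η₁ = η₂ := by
      funext i
      have h := (Finset.sum_eq_zero_iff_of_nonneg fun j _ =>
        sq_nonneg (η₁ j - η₂ j)).mp hQ i (Finset.mem_univ i)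
      have h2 : η₁ i - η₂ i = 0 := sq_eq_zero_iff.mp h
      linarith
    rw [hη]
    have h0 : 0 ≤ (gaussMeasurePi d η₂ σ A).toReal := ENNReal.toReal_nonneg
    have h1 : 1 ≤ Real.exp ε := Real.one_le_exp hε
    nlinarith [deltaMu_nonneg (μ := μ) (ε := ε) hμ]
  · -- main case
    have hQpos : 0 < ∑ i, (η₁ i - η₂ i) ^ 2 :=
      lt_of_le_of_ne (Finset.sum_nonneg fun i _ => sq_nonneg _) (Ne.symm hQ)
    obtain ⟨r, hr⟩ : ∃ r : ℝ, r = Real.sqrt (∑ i, (η₁ i - η₂ i) ^ 2) := ⟨_, rfl⟩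
    have hrpos : 0 < r := hr ▸ Real.sqrt_pos.mpr hQpos
    have hr2 : r ^ 2 = ∑ i, (η₁ i - η₂ i) ^ 2 := by rw [hr]; exact Real.sq_sqrt hQpos.le
    have hrΔ : r ≤ Δ := hr ▸ hdist
    obtain ⟨u, hu_def⟩ : ∃ u : Fin d → ℝ, u = fun i => (η₁ i - η₂ i) / r := ⟨_, rfl⟩
    have hu1 : ∑ i, u i ^ 2 = 1 := by
      rw [hu_def]
      simp only [div_pow]
      rw [← Finset.sum_div, ← hr2, div_self (by positivity)]
    have hw : ∀ i, η₂ i = η₁ i - r * u i := by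
      intro i; rw [hu_def]; field_simp; ring
    obtain ⟨η₃, hη₃⟩ : ∃ η₃ : Fin d → ℝ, η₃ = fun i => η₁ i - Δ * u i := ⟨_, rfl⟩
    have hw3 : ∀ i, η₃ i = η₁ i - Δ * u i := fun i => by rw [hη₃]
    obtain ⟨c, hc⟩ : ∃ c : ℝ, c = ε / μ - μ / 2 := ⟨_, rfl⟩
    set S : Set (Fin d → ℝ) := {x | σ * c < ∑ i, u i * (x i - η₁ i)} with hS_def
    have hgm : Measurable fun x : Fin d → ℝ => ∑ i, u i * (x i - η₁ i) :=
      Finset.measurable_sum _ fun i _ => ((measurable_pi_apply i).sub_const _).const_mul _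
    have hSm : MeasurableSet S := measurableSet_lt measurable_const hgm
    have hsum : ∀ (a : ℝ) (ηβ : Fin d → ℝ), (∀ i, ηβ i = η₁ i - a * u i) →
        ∀ x : Fin d → ℝ,
        ∑ i, (x i - ηβ i) ^ 2
          = ∑ i, (x i - η₁ i) ^ 2 + (2 * a * ∑ i, u i * (x i - η₁ i) + a ^ 2) := by
      intro a ηβ hβ x
      have hterm : ∀ i, (x i - ηβ i) ^ 2
          = (x i - η₁ i) ^ 2 + (2 * a * (u i * (x i - η₁ i)) + a ^ 2 * u i ^ 2) := by
        intro i; rw [hβ i]; ring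
      rw [Finset.sum_congr rfl fun i _ => hterm i, Finset.sum_add_distrib,
        Finset.sum_add_distrib, ← Finset.mul_sum, ← Finset.mul_sum, hu1, mul_one]
    have h2σ : (0:ℝ) < 2 * σ ^ 2 := by positivity
    have hD : (0:ℝ) < (2 * Real.pi * σ ^ 2) ^ (-(d : ℝ) / 2) :=
      Real.rpow_pos_of_pos (by positivity) _
    have hkey : ∀ k E₁ E₂ : ℝ, E₁ ≤ k + E₂ →
        (2 * Real.pi * σ ^ 2) ^ (-(d : ℝ) / 2) * Real.exp E₁
          ≤ Real.exp k * ((2 * Real.pi * σ ^ 2) ^ (-(d : ℝ) / 2) * Real.exp E₂) := by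
      intro k E₁ E₂ h
      rw [show Real.exp k * ((2 * Real.pi * σ ^ 2) ^ (-(d : ℝ) / 2) * Real.exp E₂)
          = (2 * Real.pi * σ ^ 2) ^ (-(d : ℝ) / 2) * (Real.exp k * Real.exp E₂) by ring,
        ← Real.exp_add]
      exact mul_le_mul_of_nonneg_left (Real.exp_le_exp.mpr h) hD.le
    have hkey2 : ∀ k E₁ E₂ : ℝ, k + E₁ ≤ E₂ →
        Real.exp k * ((2 * Real.pi * σ ^ 2) ^ (-(d : ℝ) / 2) * Real.exp E₁)
          ≤ (2 * Real.pi * σ ^ 2) ^ (-(d : ℝ) / 2) * Real.exp E₂ := by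
      intro k E₁ E₂ h
      rw [show Real.exp k * ((2 * Real.pi * σ ^ 2) ^ (-(d : ℝ) / 2) * Real.exp E₁)
          = (2 * Real.pi * σ ^ 2) ^ (-(d : ℝ) / 2) * (Real.exp k * Real.exp E₁) by ring,
        ← Real.exp_add]
      exact mul_le_mul_of_nonneg_left (Real.exp_le_exp.mpr h) hD.le
    have hσcμ : σ * c * μ = σ * ε - Δ * μ / 2 := by
      rw [hc, hΔσμ]; field_simp
    have hσΔ : μ * σ ^ 2 * ε = σ * Δ * ε := by rw [hΔσμ]; ring
    -- pointwise inequalities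
    have hpt1 : ∀ x ∈ A \ S, (2 * Real.pi * σ ^ 2) ^ (-(d : ℝ) / 2) *
        Real.exp (-(∑ i, (x i - η₁ i) ^ 2) / (2 * σ ^ 2))
        ≤ Real.exp ε * ((2 * Real.pi * σ ^ 2) ^ (-(d : ℝ) / 2) *
          Real.exp (-(∑ i, (x i - η₂ i) ^ 2) / (2 * σ ^ 2))) := by
      intro x hx
      have hG : ∑ i, u i * (x i - η₁ i) ≤ σ * c := not_lt.mp hx.2
      have hGμ : (∑ i, u i * (x i - η₁ i)) * μ ≤ σ * ε - Δ * μ / 2 := by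
        have h1 := mul_le_mul_of_nonneg_right hG hμ.le
        linarith
      rw [hsum r η₂ hw x]
      refine hkey ε _ _ ?_
      have hT : 2 * r * (∑ i, u i * (x i - η₁ i)) + r ^ 2 ≤ ε * (2 * σ ^ 2) := by
        have h3 : μ * (2 * r * (∑ i, u i * (x i - η₁ i)) + r ^ 2)
            ≤ μ * (ε * (2 * σ ^ 2)) := by
          nlinarith [mul_le_mul_of_nonneg_left hGμ (by positivity : (0:ℝ) ≤ 2 * r),
            mul_nonneg (mul_nonneg hσpos.le hε) (sub_nonneg.mpr hrΔ),
            mul_nonneg (mul_nonneg hrpos.le hμ.le) (sub_nonneg.mpr hrΔ)]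
        exact le_of_mul_le_mul_left h3 hμ
      have hsplitE : -(∑ i, (x i - η₁ i) ^ 2
            + (2 * r * (∑ i, u i * (x i - η₁ i)) + r ^ 2)) / (2 * σ ^ 2)
          = -(∑ i, (x i - η₁ i) ^ 2) / (2 * σ ^ 2)
            - (2 * r * (∑ i, u i * (x i - η₁ i)) + r ^ 2) / (2 * σ ^ 2) := by ring
      rw [hsplitE]
      have hdiv := (div_le_iff₀ h2σ).mpr hT
      linarith
    have hpt2 : ∀ x ∈ S \ A, Real.exp ε * ((2 * Real.pi * σ ^ 2) ^ (-(d : ℝ) / 2) *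
        Real.exp (-(∑ i, (x i - η₃ i) ^ 2) / (2 * σ ^ 2)))
        ≤ (2 * Real.pi * σ ^ 2) ^ (-(d : ℝ) / 2) *
          Real.exp (-(∑ i, (x i - η₁ i) ^ 2) / (2 * σ ^ 2)) := by
      intro x hx
      have hG : σ * c < ∑ i, u i * (x i - η₁ i) := hx.1
      have hGμ : σ * ε - Δ * μ / 2 ≤ (∑ i, u i * (x i - η₁ i)) * μ := by
        have h1 := mul_le_mul_of_nonneg_right hG.le hμ.le
        linarith
      rw [hsum Δ η₃ hw3 x]
      refine hkey2 ε _ _ ?_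
      have hT : ε * (2 * σ ^ 2) ≤ 2 * Δ * (∑ i, u i * (x i - η₁ i)) + Δ ^ 2 := by
        have h3 : μ * (ε * (2 * σ ^ 2))
            ≤ μ * (2 * Δ * (∑ i, u i * (x i - η₁ i)) + Δ ^ 2) := by
          nlinarith [mul_le_mul_of_nonneg_left hGμ (by positivity : (0:ℝ) ≤ 2 * Δ)]
        exact le_of_mul_le_mul_left h3 hμ
      have hsplitE : -(∑ i, (x i - η₁ i) ^ 2
            + (2 * Δ * (∑ i, u i * (x i - η₁ i)) + Δ ^ 2)) / (2 * σ ^ 2)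
          = -(∑ i, (x i - η₁ i) ^ 2) / (2 * σ ^ 2)
            - (2 * Δ * (∑ i, u i * (x i - η₁ i)) + Δ ^ 2) / (2 * σ ^ 2) := by ring
      rw [hsplitE]
      have hdiv := (le_div_iff₀ h2σ).mpr hT
      linarith
    have hpt3 : ∀ x ∈ S ∩ A, (2 * Real.pi * σ ^ 2) ^ (-(d : ℝ) / 2) *
        Real.exp (-(∑ i, (x i - η₃ i) ^ 2) / (2 * σ ^ 2))
        ≤ (1:ℝ) * ((2 * Real.pi * σ ^ 2) ^ (-(d : ℝ) / 2) *
          Real.exp (-(∑ i, (x i - η₂ i) ^ 2) / (2 * σ ^ 2))) := by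
      intro x hx
      rw [one_mul]
      have hG : σ * c < ∑ i, u i * (x i - η₁ i) := hx.1
      have hGμ : σ * ε - Δ * μ / 2 ≤ (∑ i, u i * (x i - η₁ i)) * μ := by
        have h1 := mul_le_mul_of_nonneg_right hG.le hμ.le
        linarith
      rw [hsum Δ η₃ hw3 x, hsum r η₂ hw x]
      refine mul_le_mul_of_nonneg_left (Real.exp_le_exp.mpr ?_) hD.le
      have hT : 2 * r * (∑ i, u i * (x i - η₁ i)) + r ^ 2
          ≤ 2 * Δ * (∑ i, u i * (x i - η₁ i)) + Δ ^ 2 := by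
        have h3 : μ * (2 * r * (∑ i, u i * (x i - η₁ i)) + r ^ 2)
            ≤ μ * (2 * Δ * (∑ i, u i * (x i - η₁ i)) + Δ ^ 2) := by
          nlinarith [mul_nonneg (sub_nonneg.mpr hrΔ)
              (by nlinarith [mul_nonneg (mul_nonneg hσpos.le hε) hμ.le,
                mul_nonneg hrpos.le hμ.le] :
              (0:ℝ) ≤ 2 * ((∑ i, u i * (x i - η₁ i)) * μ) + Δ * μ + r * μ)]
        exact le_of_mul_le_mul_left h3 hμ
      have hsplitE1 : -(∑ i, (x i - η₁ i) ^ 2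
            + (2 * Δ * (∑ i, u i * (x i - η₁ i)) + Δ ^ 2)) / (2 * σ ^ 2)
          = -(∑ i, (x i - η₁ i) ^ 2) / (2 * σ ^ 2)
            - (2 * Δ * (∑ i, u i * (x i - η₁ i)) + Δ ^ 2) / (2 * σ ^ 2) := by ring
      have hsplitE2 : -(∑ i, (x i - η₁ i) ^ 2
            + (2 * r * (∑ i, u i * (x i - η₁ i)) + r ^ 2)) / (2 * σ ^ 2)
          = -(∑ i, (x i - η₁ i) ^ 2) / (2 * σ ^ 2)
            - (2 * r * (∑ i, u i * (x i - η₁ i)) + r ^ 2) / (2 * σ ^ 2) := by ring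
      rw [hsplitE1, hsplitE2]
      have hdiv := (div_le_div_iff_of_pos_right h2σ).mpr hT
      linarith
    -- measure comparison helpers
    have hm : ∀ η : Fin d → ℝ, Measurable fun x : Fin d → ℝ =>
        ENNReal.ofReal ((2 * Real.pi * σ ^ 2) ^ (-(d : ℝ) / 2) *
          Real.exp (-(∑ i, (x i - η i) ^ 2) / (2 * σ ^ 2))) := by
      intro η
      apply Measurable.ennreal_ofReal
      apply Measurable.const_mul
      exact Real.measurable_exp.comp ((Finset.measurable_sum _ fun i _ =>
        ((measurable_pi_apply i).sub_const _).pow_const 2).neg.div_const _)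
    have hcomp : ∀ (ηa ηb : Fin d → ℝ) (k : ℝ), 0 ≤ k →
        ∀ (B : Set (Fin d → ℝ)), MeasurableSet B →
        (∀ x ∈ B, (2 * Real.pi * σ ^ 2) ^ (-(d : ℝ) / 2) *
            Real.exp (-(∑ i, (x i - ηa i) ^ 2) / (2 * σ ^ 2))
          ≤ k * ((2 * Real.pi * σ ^ 2) ^ (-(d : ℝ) / 2) *
              Real.exp (-(∑ i, (x i - ηb i) ^ 2) / (2 * σ ^ 2)))) →
        gaussMeasurePi d ηa σ B ≤ ENNReal.ofReal k * gaussMeasurePi d ηb σ B := by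
      intro ηa ηb k hk B hB hpt
      rw [gaussMeasurePi, gaussMeasurePi, withDensity_apply _ hB, withDensity_apply _ hB,
        ← lintegral_const_mul _ (hm ηb)]
      refine setLIntegral_mono ((hm ηb).const_mul _) fun x hx => ?_
      rw [← ENNReal.ofReal_mul hk]
      exact ENNReal.ofReal_le_ofReal (hpt x hx)
    have hcomp2 : ∀ (ηa ηb : Fin d → ℝ) (k : ℝ), 0 ≤ k →
        ∀ (B : Set (Fin d → ℝ)), MeasurableSet B →
        (∀ x ∈ B, k * ((2 * Real.pi * σ ^ 2) ^ (-(d : ℝ) / 2) *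
            Real.exp (-(∑ i, (x i - ηa i) ^ 2) / (2 * σ ^ 2)))
          ≤ (2 * Real.pi * σ ^ 2) ^ (-(d : ℝ) / 2) *
              Real.exp (-(∑ i, (x i - ηb i) ^ 2) / (2 * σ ^ 2))) →
        ENNReal.ofReal k * gaussMeasurePi d ηa σ B ≤ gaussMeasurePi d ηb σ B := by
      intro ηa ηb k hk B hB hpt
      rw [gaussMeasurePi, gaussMeasurePi, withDensity_apply _ hB, withDensity_apply _ hB,
        ← lintegral_const_mul _ (hm ηa)]
      refine setLIntegral_mono (hm ηb) fun x hx => ?_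
      rw [← ENNReal.ofReal_mul hk]
      exact ENNReal.ofReal_le_ofReal (hpt x hx)
    have h_a := hcomp η₁ η₂ (Real.exp ε) (Real.exp_nonneg ε) (A \ S) (hA.diff hSm) hpt1
    have h_b := hcomp2 η₃ η₁ (Real.exp ε) (Real.exp_nonneg ε) (S \ A) (hSm.diff hA) hpt2
    have h_c := hcomp η₃ η₂ 1 zero_le_one (S ∩ A) (hSm.inter hA) hpt3
    rw [ENNReal.ofReal_one, one_mul] at h_c
    have hsplitA : gaussMeasurePi d η₁ σ (S ∩ A) + gaussMeasurePi d η₁ σ (A \ S)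
        = gaussMeasurePi d η₁ σ A := by
      rw [Set.inter_comm]; exact measure_inter_add_diff A hSm
    have hsplitB : gaussMeasurePi d η₂ σ (S ∩ A) + gaussMeasurePi d η₂ σ (A \ S)
        = gaussMeasurePi d η₂ σ A := by
      rw [Set.inter_comm]; exact measure_inter_add_diff A hSm
    have hsplitS1 : gaussMeasurePi d η₁ σ (S ∩ A) + gaussMeasurePi d η₁ σ (S \ A)
        = gaussMeasurePi d η₁ σ S := measure_inter_add_diff S hA
    have hsplitS3 : gaussMeasurePi d η₃ σ (S ∩ A) + gaussMeasurePi d η₃ σ (S \ A)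
        = gaussMeasurePi d η₃ σ S := measure_inter_add_diff S hA
    have main : gaussMeasurePi d η₁ σ A
          + ENNReal.ofReal (Real.exp ε) * gaussMeasurePi d η₃ σ S
        ≤ ENNReal.ofReal (Real.exp ε) * gaussMeasurePi d η₂ σ A
          + gaussMeasurePi d η₁ σ S := by
      rw [← hsplitA, ← hsplitB, ← hsplitS1, ← hsplitS3, mul_add, mul_add]
      calc gaussMeasurePi d η₁ σ (S ∩ A) + gaussMeasurePi d η₁ σ (A \ S)
            + (ENNReal.ofReal (Real.exp ε) * gaussMeasurePi d η₃ σ (S ∩ A)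
              + ENNReal.ofReal (Real.exp ε) * gaussMeasurePi d η₃ σ (S \ A))
          ≤ gaussMeasurePi d η₁ σ (S ∩ A)
            + ENNReal.ofReal (Real.exp ε) * gaussMeasurePi d η₂ σ (A \ S)
            + (ENNReal.ofReal (Real.exp ε) * gaussMeasurePi d η₂ σ (S ∩ A)
              + gaussMeasurePi d η₁ σ (S \ A)) := by
            refine add_le_add (add_le_add le_rfl h_a) (add_le_add ?_ h_b)
            exact mul_le_mul_right h_c _
      _ = ENNReal.ofReal (Real.exp ε) * gaussMeasurePi d η₂ σ (S ∩ A)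
            + ENNReal.ofReal (Real.exp ε) * gaussMeasurePi d η₂ σ (A \ S)
            + (gaussMeasurePi d η₁ σ (S ∩ A) + gaussMeasurePi d η₁ σ (S \ A)) := by
            ring
    -- measure values of S
    have hPS1 : (gaussMeasurePi d η₁ σ S).toReal = Phi (-ε / μ + μ / 2) := by
      rw [gaussMeasurePi_translate η₁ σ hSm]
      have hpre : (fun z : Fin d → ℝ => z + η₁) ⁻¹' S
          = {z : Fin d → ℝ | σ * c < ∑ i, u i * z i} := by
        ext z
        simp only [hS_def, Set.mem_preimage, Set.mem_setOf_eq, Pi.add_apply,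
          add_sub_cancel_right]
      rw [hpre, gaussMeasurePi_halfspace hσpos hu1 (σ * c),
        mul_div_cancel_left₀ _ hσpos.ne', gaussianReal_Ioi_toReal]
      congr 1
      rw [hc]; ring
    have hPS3 : (gaussMeasurePi d η₃ σ S).toReal = Phi (-ε / μ - μ / 2) := by
      rw [gaussMeasurePi_translate η₃ σ hSm]
      have hpre : (fun z : Fin d → ℝ => z + η₃) ⁻¹' S
          = {z : Fin d → ℝ | σ * c + Δ < ∑ i, u i * z i} := by
        ext z
        simp only [hS_def, Set.mem_preimage, Set.mem_setOf_eq, Pi.add_apply]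
        have hzz : ∑ i, u i * (z i + η₃ i - η₁ i) = (∑ i, u i * z i) - Δ := by
          have : ∀ i, u i * (z i + η₃ i - η₁ i) = u i * z i - Δ * u i ^ 2 := by
            intro i; rw [hw3 i]; ring
          rw [Finset.sum_congr rfl fun i _ => this i, Finset.sum_sub_distrib,
            ← Finset.mul_sum, hu1, mul_one]
        rw [hzz]
        constructor <;> intro h <;> linarith
      rw [hpre, gaussMeasurePi_halfspace hσpos hu1 (σ * c + Δ), gaussianReal_Ioi_toReal]
      have harg : (σ * c + Δ) / σ = c + μ := by
        rw [hΔσμ]; field_simp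
      rw [harg]
      congr 1
      rw [hc]; ring
    -- conclude
    have hfin2 : ENNReal.ofReal (Real.exp ε) * gaussMeasurePi d η₂ σ A
        + gaussMeasurePi d η₁ σ S ≠ ⊤ := by
      refine ENNReal.add_ne_top.mpr ⟨?_, hne_top η₁ S hSm⟩
      exact ENNReal.mul_ne_top ENNReal.ofReal_ne_top (hne_top η₂ A hA)
    have hmono := ENNReal.toReal_mono hfin2 main
    rw [ENNReal.toReal_add (hne_top η₁ A hA)
        (ENNReal.mul_ne_top ENNReal.ofReal_ne_top (hne_top η₃ S hSm)),
      ENNReal.toReal_add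
        (ENNReal.mul_ne_top ENNReal.ofReal_ne_top (hne_top η₂ A hA))
        (hne_top η₁ S hSm),
      ENNReal.toReal_mul, ENNReal.toReal_mul,
      ENNReal.toReal_ofReal (Real.exp_nonneg ε), hPS1, hPS3] at hmono
    rw [deltaMu]
    linarith only [hmono]
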